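/- arXiv:1701.03429 — 2 statements merged into one kernel-verified Lean document; each statement's English description precedes it below -/
import Mathlib

section
/- Let $f = u+iv$ be holomorphic on the unit disk, $\epsilon > 0$, and define $F_\epsilon = (\tfrac{4}{3}\epsilon + |f|^2)^2$, $U_\epsilon = (\epsilon + u^2)^2$, $V_\epsilon = (\epsilon + v^2)^2$. Then $\Delta U_\epsilon + \Delta V_\epsilon = \tfrac{3}{4}\Delta F_\epsilon$ on the disk. -/
open Complex Metric

/-- The planar Laplacian `Δ G = ∂²G/∂x² + ∂²G/∂y²` of a function `G : ℂ → ℝ`. -/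
noncomputable def planarLaplacian (G : ℂ → ℝ) (z : ℂ) : ℝ :=
  deriv (deriv fun x : ℝ => G (z + x)) 0 + deriv (deriv fun y : ℝ => G (z + y * Complex.I)) 0

/-!
Along each coordinate line through `z` the restriction of `f` is a holomorphic function of one
real variable, so the second directional derivatives follow from the chain and product rules.
In the imaginary direction the second derivative of `f` picks up the factor `I ^ 2 = -1`, which
makes `u` and `v` harmonic. Writing `f'` for the complex derivative, this gives
`Δ U_ε = (12 u² + 4ε) |f'|²`, `Δ V_ε = (12 v² + 4ε) |f'|²` and
`Δ F_ε = (16 |f|² + 32ε/3) |f'|²`, and the identity follows from `u² + v² = |f|²`.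
-/

open Filter Topology

section SecondDeriv

variable {𝕜 F G : Type*} [NontriviallyNormedField 𝕜] [NormedAddCommGroup F] [NormedSpace 𝕜 F]
  [NormedAddCommGroup G] [NormedSpace 𝕜 G]

def HasSecondDerivAt (a a' : 𝕜 → F) (a'' : F) (x : 𝕜) : Prop :=
  (∀ᶠ t in 𝓝 x, HasDerivAt a (a' t) t) ∧ HasDerivAt a' a'' x

namespace HasSecondDerivAt

variable {a a' b b' : 𝕜 → F} {a'' b'' : F} {x : 𝕜}

theorem hasDerivAt (h : HasSecondDerivAt a a' a'' x) : HasDerivAt a (a' x) x :=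
  h.1.self_of_nhds

theorem deriv_deriv (h : HasSecondDerivAt a a' a'' x) : deriv (deriv a) x = a'' := by
  have hderiv : deriv a =ᶠ[𝓝 x] a' := h.1.mono fun _ ht => ht.deriv
  rw [hderiv.deriv_eq, h.2.deriv]

theorem const_add (c : F) (h : HasSecondDerivAt a a' a'' x) :
    HasSecondDerivAt (fun t => c + a t) a' a'' x :=
  ⟨h.1.mono fun _ ht => ht.const_add c, h.2⟩

theorem add (ha : HasSecondDerivAt a a' a'' x) (hb : HasSecondDerivAt b b' b'' x) :
    HasSecondDerivAt (fun t => a t + b t) (fun t => a' t + b' t) (a'' + b'') x :=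
  ⟨(ha.1.and hb.1).mono fun _ ht => ht.1.add ht.2, ha.2.add hb.2⟩

theorem clm_comp (ℓ : F →L[𝕜] G) (h : HasSecondDerivAt a a' a'' x) :
    HasSecondDerivAt (fun t => ℓ (a t)) (fun t => ℓ (a' t)) (ℓ a'') x :=
  ⟨h.1.mono fun _ ht => ℓ.hasFDerivAt.comp_hasDerivAt _ ht, ℓ.hasFDerivAt.comp_hasDerivAt _ h.2⟩

end HasSecondDerivAt

theorem HasSecondDerivAt.sq {a a' : 𝕜 → 𝕜} {a'' x : 𝕜} (h : HasSecondDerivAt a a' a'' x) :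
    HasSecondDerivAt (fun t => a t ^ 2) (fun t => 2 * a t * a' t)
      (2 * a' x ^ 2 + 2 * a x * a'') x :=
  ⟨h.1.mono fun _ ht => (ht.fun_pow 2).congr_deriv (by norm_num),
    ((h.hasDerivAt.const_mul 2).fun_mul h.2).congr_deriv (by ring)⟩

theorem HasSecondDerivAt.re {a a' : ℝ → ℂ} {a'' : ℂ} {x : ℝ} (h : HasSecondDerivAt a a' a'' x) :
    HasSecondDerivAt (fun t => (a t).re) (fun t => (a' t).re) a''.re x :=
  h.clm_comp Complex.reCLM

theorem HasSecondDerivAt.im {a a' : ℝ → ℂ} {a'' : ℂ} {x : ℝ} (h : HasSecondDerivAt a a' a'' x) :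
    HasSecondDerivAt (fun t => (a t).im) (fun t => (a' t).im) a''.im x :=
  h.clm_comp Complex.imCLM

end SecondDeriv

theorem hasDerivAt_comp_line {f : ℂ → ℂ} {f' z w : ℂ} {t : ℝ} (hf : HasDerivAt f f' (z + t * w)) :
    HasDerivAt (fun s : ℝ => f (z + s * w)) (f' * w) t := by
  have hline : HasDerivAt (fun u : ℂ => z + u * w) w t := by
    simpa using ((hasDerivAt_id (t : ℂ)).mul_const w).const_add z
  exact (hf.comp (t : ℂ) hline).comp_ofReal

theorem hasSecondDerivAt_comp_line {f : ℂ → ℂ} {s : Set ℂ} (hs : IsOpen s)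
    (hf : DifferentiableOn ℂ f s) {z : ℂ} (hz : z ∈ s) (w : ℂ) :
    HasSecondDerivAt (fun t : ℝ => f (z + t * w)) (fun t => deriv f (z + t * w) * w)
      (deriv (deriv f) z * w ^ 2) 0 := by
  have hline : Continuous fun t : ℝ => z + t * w := by fun_prop
  have hnear : ∀ᶠ t : ℝ in 𝓝 0, z + t * w ∈ s :=
    hline.continuousAt.preimage_mem_nhds (by simpa using hs.mem_nhds hz)
  refine ⟨hnear.mono fun t ht => hasDerivAt_comp_line ?_, ?_⟩
  · exact (hf.differentiableAt (hs.mem_nhds ht)).hasDerivAt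
  · have hf'' : HasDerivAt (deriv f) (deriv (deriv f) z) (z + (0 : ℝ) * w) := by
      simpa using ((hf.analyticOnNhd hs).deriv z hz).differentiableAt.hasDerivAt
    simpa [sq, mul_assoc] using (hasDerivAt_comp_line hf'').mul_const w

theorem planarLaplacian_eq_add {G : ℂ → ℝ} {z : ℂ} {a' b' : ℝ → ℝ} {a'' b'' : ℝ}
    (hx : HasSecondDerivAt (fun t : ℝ => G (z + t)) a' a'' 0)
    (hy : HasSecondDerivAt (fun t : ℝ => G (z + t * Complex.I)) b' b'' 0) :
    planarLaplacian G z = a'' + b'' := by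
  rw [planarLaplacian, hx.deriv_deriv, hy.deriv_deriv]

theorem laplacian_identity_p_four_general (f : ℂ → ℂ)
    (hf : DifferentiableOn ℂ f (ball (0 : ℂ) 1)) (ε : ℝ) :
    ∀ z ∈ ball (0 : ℂ) 1,
      planarLaplacian (fun w => (ε + (f w).re ^ 2) ^ 2) z +
        planarLaplacian (fun w => (ε + (f w).im ^ 2) ^ 2) z =
      3 / 4 * planarLaplacian (fun w => (4 / 3 * ε + ‖f w‖ ^ 2) ^ 2) z := by
  intro z hz
  have hx : HasSecondDerivAt (fun t : ℝ => f (z + t)) (fun t => deriv f (z + t))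
      (deriv (deriv f) z) 0 := by
    simpa using hasSecondDerivAt_comp_line isOpen_ball hf hz 1
  have hy := hasSecondDerivAt_comp_line isOpen_ball hf hz I
  simp only [Complex.sq_norm, Complex.normSq_apply, ← sq]
  rw [planarLaplacian_eq_add (hx.re.sq.const_add ε).sq (hy.re.sq.const_add ε).sq,
    planarLaplacian_eq_add (hx.im.sq.const_add ε).sq (hy.im.sq.const_add ε).sq,
    planarLaplacian_eq_add ((hx.re.sq.add hx.im.sq).const_add _).sq
      ((hy.re.sq.add hy.im.sq).const_add _).sq]
  simp only [ofReal_zero, zero_mul, add_zero, I_sq, mul_I_re, mul_I_im, mul_neg_one, neg_re, neg_im]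
  ring

/-- For `f = u + iv` holomorphic on the unit disk and `ε > 0`, with
`F_ε = (4ε/3 + |f|²)²`, `U_ε = (ε + u²)²`, `V_ε = (ε + v²)²`, one has
`Δ U_ε + Δ V_ε = (3/4) Δ F_ε` on the disk. -/
theorem laplacian_identity_p_four (f : ℂ → ℂ)
    (hf : DifferentiableOn ℂ f (ball (0 : ℂ) 1)) (ε : ℝ) (hε : 0 < ε) :
    ∀ z ∈ ball (0 : ℂ) 1,
      planarLaplacian (fun w => (ε + (f w).re ^ 2) ^ 2) z +
        planarLaplacian (fun w => (ε + (f w).im ^ 2) ^ 2) z =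
      3 / 4 * planarLaplacian (fun w => (4 / 3 * ε + ‖f w‖ ^ 2) ^ 2) z :=
  laplacian_identity_p_four_general f hf ε
end

section
/- Let $f = u+iv$ be holomorphic on the unit disk, $1 < p \leq 4$, $q = p/(p-1)$, $\epsilon > 0$. Set $F_\epsilon = (q\epsilon + |f|^2)^{p/2}$, $U_\epsilon = (\epsilon + u^2)^{p/2}$, $V_\epsilon = (\epsilon + v^2)^{p/2}$. Then $\Delta(U_\epsilon + V_\epsilon) \geq \frac{p-1}{p}\Delta F_\epsilon$ pointwise on the disk. -/
open Complex Metric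

/-!
Along a line, `((a + w)^r)'' = r (a + w)^(r-2) ((r-1) w'^2 + (a + w) w'')`. Since `u` and `v` are
harmonic with `|∇u|² = |∇v|² = |f'|²`, while `|f|²` has `|∇|f|²|² = 4|f|²|f'|²` and `Δ|f|² = 4|f'|²`,
this gives `ΔU_ε = p|f'|² (ε + u²)^(p/2-2) (ε + (p-1)u²)` (likewise for `V_ε`) and
`ΔF_ε = p|f'|² (qε + |f|²)^(p/2-2) (2qε + p|f|²)`. As `p ≤ 4`, the exponent `p/2 - 2` is
nonpositive and `qε + |f|²` dominates both `ε + u²` and `ε + v²`, while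
`(p-1)/p · (2qε + p|f|²) = (ε + (p-1)u²) + (ε + (p-1)v²)`; the comparison follows termwise.
-/

open Filter Topology

def HasTwoJetAt (φ : ℝ → ℝ) (d₁ d₂ x : ℝ) : Prop :=
  ∃ φ' : ℝ → ℝ, (∀ᶠ t in 𝓝 x, HasDerivAt φ (φ' t) t) ∧ φ' x = d₁ ∧ HasDerivAt φ' d₂ x

namespace HasTwoJetAt

variable {φ ψ : ℝ → ℝ} {d₁ d₂ e₁ e₂ x : ℝ}

theorem deriv_deriv (h : HasTwoJetAt φ d₁ d₂ x) : deriv (deriv φ) x = d₂ := by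
  obtain ⟨φ', hφ, -, hφ'⟩ := h
  have hderiv : deriv φ =ᶠ[𝓝 x] φ' := hφ.mono fun t ht => ht.deriv
  rw [hderiv.deriv_eq, hφ'.deriv]

theorem continuousAt (h : HasTwoJetAt φ d₁ d₂ x) : ContinuousAt φ x :=
  let ⟨_, hφ, _⟩ := h
  hφ.self_of_nhds.continuousAt

theorem add (hφ : HasTwoJetAt φ d₁ d₂ x) (hψ : HasTwoJetAt ψ e₁ e₂ x) :
    HasTwoJetAt (fun t => φ t + ψ t) (d₁ + e₁) (d₂ + e₂) x := by
  obtain ⟨φ', hφ, rfl, hφ'⟩ := hφ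
  obtain ⟨ψ', hψ, rfl, hψ'⟩ := hψ
  exact ⟨fun t => φ' t + ψ' t, (hφ.and hψ).mono fun t ht => ht.1.add ht.2, rfl, hφ'.add hψ'⟩

theorem sq (h : HasTwoJetAt φ d₁ d₂ x) :
    HasTwoJetAt (fun t => φ t ^ 2) (2 * φ x * d₁) (2 * d₁ ^ 2 + 2 * φ x * d₂) x := by
  obtain ⟨φ', hφ, rfl, hφ'⟩ := h
  refine ⟨fun t => 2 * φ t * φ' t, hφ.mono fun t ht => ?_, rfl, ?_⟩
  · exact (ht.fun_pow 2).congr_deriv (by simp)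
  · exact ((hφ.self_of_nhds.const_mul 2).mul hφ').congr_deriv (by ring)

theorem const_add_rpow (h : HasTwoJetAt φ d₁ d₂ x) {a : ℝ} (r : ℝ) (hpos : 0 < a + φ x) :
    HasTwoJetAt (fun t => (a + φ t) ^ r) (r * (a + φ x) ^ (r - 1) * d₁)
      (r * (a + φ x) ^ (r - 2) * ((r - 1) * d₁ ^ 2 + (a + φ x) * d₂)) x := by
  have hne : ∀ᶠ t in 𝓝 x, a + φ t ≠ 0 :=
    ((continuousAt_const.add h.continuousAt).eventually (lt_mem_nhds hpos)).mono
      fun t ht => ht.ne'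
  obtain ⟨φ', hφ, rfl, hφ'⟩ := h
  refine ⟨fun t => r * (a + φ t) ^ (r - 1) * φ' t, (hφ.and hne).mono fun t ht => ?_, rfl, ?_⟩
  · exact ((ht.1.const_add a).rpow_const (Or.inl ht.2)).congr_deriv (by ring)
  · refine ((((hφ.self_of_nhds.const_add a).rpow_const (p := r - 1)
      (Or.inl hpos.ne')).const_mul r).mul hφ').congr_deriv ?_
    rw [show r - 1 = r - 2 + 1 by ring, Real.rpow_add_one hpos.ne',
      show r - 2 + 1 - 1 = r - 2 by ring]
    ring

end HasTwoJetAt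

theorem DifferentiableAt.hasDerivAt_comp_line {g : ℂ → ℂ} {z c : ℂ} {t : ℝ}
    (hg : DifferentiableAt ℂ g (z + t * c)) :
    HasDerivAt (fun s : ℝ => g (z + s * c)) (c * deriv g (z + t * c)) t := by
  have hline : HasDerivAt (fun w : ℂ => z + w * c) c t := by
    simpa using ((hasDerivAt_id (t : ℂ)).mul_const c).const_add z
  simpa [mul_comm] using (hg.hasDerivAt.comp (t : ℂ) hline).comp_ofReal

theorem AnalyticAt.hasTwoJetAt_comp_line (ℓ : ℂ →L[ℝ] ℝ) {g : ℂ → ℂ} {z : ℂ}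
    (hg : AnalyticAt ℂ g z) (c : ℂ) :
    HasTwoJetAt (fun t : ℝ => ℓ (g (z + t * c))) (ℓ (c * deriv g z))
      (ℓ (c ^ 2 * deriv (deriv g) z)) 0 := by
  have hline : Tendsto (fun t : ℝ => z + t * c) (𝓝 0) (𝓝 z) := by
    have : Continuous (fun t : ℝ => z + t * c) := by fun_prop
    simpa using this.tendsto 0
  refine ⟨fun t => ℓ (c * deriv g (z + t * c)),
    (hline.eventually hg.eventually_analyticAt).mono fun t ht => ?_, by simp, ?_⟩
  · exact ℓ.hasFDerivAt.comp_hasDerivAt t ht.differentiableAt.hasDerivAt_comp_line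
  · have h := hg.deriv.differentiableAt (x := z)
    rw [show z = z + ((0 : ℝ) : ℂ) * c by simp] at h
    have := ℓ.hasFDerivAt.comp_hasDerivAt (0 : ℝ) (h.hasDerivAt_comp_line.const_mul c)
    simp only [ofReal_zero, zero_mul, add_zero] at this
    exact this.congr_deriv (by rw [pow_two, mul_assoc])

theorem planarLaplacian_eq_of_hasTwoJetAt {G : ℂ → ℝ} {z : ℂ} {d₁ d₂ e₁ e₂ : ℝ}
    (hx : HasTwoJetAt (fun t : ℝ => G (z + t * 1)) d₁ d₂ 0)
    (hy : HasTwoJetAt (fun t : ℝ => G (z + t * I)) e₁ e₂ 0) :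
    planarLaplacian G z = d₂ + e₂ := by
  simp only [mul_one] at hx
  rw [planarLaplacian, hx.deriv_deriv, hy.deriv_deriv]

namespace AnalyticAt

variable {g : ℂ → ℂ} {z : ℂ} {a : ℝ}

theorem planarLaplacian_rpow_re_sq_add_rpow_im_sq (hg : AnalyticAt ℂ g z) (ha : 0 < a) (r : ℝ) :
    planarLaplacian (fun w => (a + (g w).re ^ 2) ^ r + (a + (g w).im ^ 2) ^ r) z =
      2 * r * ‖deriv g z‖ ^ 2 *
        ((a + (g z).re ^ 2) ^ (r - 2) * (a + (2 * r - 1) * (g z).re ^ 2) +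
          (a + (g z).im ^ 2) ^ (r - 2) * (a + (2 * r - 1) * (g z).im ^ 2)) := by
  have hjet (c : ℂ) := ((hg.hasTwoJetAt_comp_line reCLM c).sq.const_add_rpow r
    (by positivity)).add ((hg.hasTwoJetAt_comp_line imCLM c).sq.const_add_rpow r (by positivity))
  simp only [reCLM_apply, imCLM_apply] at hjet
  rw [planarLaplacian_eq_of_hasTwoJetAt (hjet 1) (hjet I)]
  simp only [ofReal_zero, zero_mul, add_zero, one_pow, one_mul, I_sq, neg_one_mul, neg_re, neg_im,
    mul_re, mul_im, I_re, I_im, Complex.sq_norm, normSq_apply]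
  ring

theorem planarLaplacian_const_add_norm_sq_rpow (hg : AnalyticAt ℂ g z) (ha : 0 < a) (r : ℝ) :
    planarLaplacian (fun w => (a + ‖g w‖ ^ 2) ^ r) z =
      4 * r * ‖deriv g z‖ ^ 2 * (a + ‖g z‖ ^ 2) ^ (r - 2) * (a + r * ‖g z‖ ^ 2) := by
  have hjet (c : ℂ) := ((hg.hasTwoJetAt_comp_line reCLM c).sq.add
    (hg.hasTwoJetAt_comp_line imCLM c).sq).const_add_rpow r (by positivity)
  simp only [reCLM_apply, imCLM_apply] at hjet
  simp only [Complex.sq_norm, normSq_apply, ← sq]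
  rw [planarLaplacian_eq_of_hasTwoJetAt (hjet 1) (hjet I)]
  simp only [ofReal_zero, zero_mul, add_zero, one_pow, one_mul, I_sq, neg_one_mul, neg_re, neg_im,
    mul_re, mul_im, I_re, I_im]
  ring

end AnalyticAt

theorem rpow_comparison {p q ε : ℝ} (hp1 : 1 < p) (hp4 : p ≤ 4) (hq : q = p / (p - 1))
    (hε : 0 < ε) (w : ℂ) :
    (p - 1) / p * (2 * (q * ε + ‖w‖ ^ 2) ^ (p / 2 - 2) * (q * ε + p / 2 * ‖w‖ ^ 2)) ≤
      (ε + w.re ^ 2) ^ (p / 2 - 2) * (ε + (p - 1) * w.re ^ 2) +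
        (ε + w.im ^ 2) ^ (p / 2 - 2) * (ε + (p - 1) * w.im ^ 2) := by
  have hp : 0 < p - 1 := by linarith
  have hqε : ε ≤ q * ε := by
    rw [hq]; exact le_mul_of_one_le_left hε.le ((one_le_div hp).2 (by linarith))
  have hnorm : ‖w‖ ^ 2 = w.re ^ 2 + w.im ^ 2 := by rw [Complex.sq_norm, normSq_apply]; ring
  have hexp : p / 2 - 2 ≤ 0 := by linarith
  have hre : (q * ε + ‖w‖ ^ 2) ^ (p / 2 - 2) ≤ (ε + w.re ^ 2) ^ (p / 2 - 2) :=
    Real.rpow_le_rpow_of_nonpos (by positivity) (by nlinarith [sq_nonneg w.im]) hexp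
  have him : (q * ε + ‖w‖ ^ 2) ^ (p / 2 - 2) ≤ (ε + w.im ^ 2) ^ (p / 2 - 2) :=
    Real.rpow_le_rpow_of_nonpos (by positivity) (by nlinarith [sq_nonneg w.re]) hexp
  calc (p - 1) / p * (2 * (q * ε + ‖w‖ ^ 2) ^ (p / 2 - 2) * (q * ε + p / 2 * ‖w‖ ^ 2))
      = (q * ε + ‖w‖ ^ 2) ^ (p / 2 - 2) * (ε + (p - 1) * w.re ^ 2) +
          (q * ε + ‖w‖ ^ 2) ^ (p / 2 - 2) * (ε + (p - 1) * w.im ^ 2) := by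
        rw [hq, hnorm]; field_simp; ring
    _ ≤ _ := add_le_add (mul_le_mul_of_nonneg_right hre (by positivity))
        (mul_le_mul_of_nonneg_right him (by positivity))

/-- For `f = u+iv` holomorphic on the unit disk, `1 < p ≤ 4`, `q = p/(p-1)`, `ε > 0`, with
`F_ε = (qε + |f|²)^{p/2}`, `U_ε = (ε + u²)^{p/2}`, `V_ε = (ε + v²)^{p/2}`:
`Δ(U_ε + V_ε) ≤ ((p-1)/p) Δ F_ε` (reversed) pointwise on the disk. -/
theorem laplacian_comparison_le_four (f : ℂ → ℂ)
    (hf : DifferentiableOn ℂ f (ball (0 : ℂ) 1))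
    (p q : ℝ) (hp1 : 1 < p) (hp4 : p ≤ 4) (hq : q = p / (p - 1)) (ε : ℝ) (hε : 0 < ε) :
    ∀ z ∈ ball (0 : ℂ) 1,
      planarLaplacian (fun w => (ε + (f w).re ^ 2) ^ (p / 2) + (ε + (f w).im ^ 2) ^ (p / 2)) z ≥
        (p - 1) / p *
          planarLaplacian (fun w => (q * ε + ‖f w‖ ^ 2) ^ (p / 2)) z := by
  intro z hz
  have hfz : AnalyticAt ℂ f z := hf.analyticAt (isOpen_ball.mem_nhds hz)
  have hqε : 0 < q * ε := mul_pos (by rw [hq]; exact div_pos (by linarith) (by linarith)) hε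
  rw [hfz.planarLaplacian_rpow_re_sq_add_rpow_im_sq hε,
    hfz.planarLaplacian_const_add_norm_sq_rpow hqε]
  have key := mul_le_mul_of_nonneg_left (rpow_comparison hp1 hp4 hq hε (f z))
    (by positivity : 0 ≤ p * ‖deriv f z‖ ^ 2)
  linarith
end
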